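/- arXiv:1208.5391 — 2 statements merged into one kernel-verified Lean document; each statement's English description precedes it below -/
import Mathlib

section
/- Let r be a positive integer and t a real number with t > 1. Then there exist positive integers a and b such that r divides b + 1 and a/(b+1) < t < a/b. Moreover, a and b can be chosen arbitrarily large: for every N there exist such a, b with a > N and b > N. -/
/-- Lemma 3.2: for `r > 0` and real `t > 1`, there are arbitrarily large positive
integers `a, b` with `r ∣ b + 1` and `a/(b+1) < t < a/b`. -/
theorem stmt_0 (r : ℕ) (hr : 0 < r) (t : ℝ) (ht : 1 < t) (N : ℕ) :
    ∃ a b : ℕ, 0 < a ∧ 0 < b ∧ N < a ∧ N < b ∧ r ∣ (b + 1) ∧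
      (a : ℝ) / (b + 1) < t ∧ t < (a : ℝ) / b := by
  set b : ℕ := r * (N + 2) - 1 with hb
  have hb1 : b + 1 = r * (N + 2) := by
    have : 1 ≤ r * (N + 2) := Nat.one_le_iff_ne_zero.mpr (by positivity)
    omega
  have hbN : N < b := by
    have : N + 2 ≤ r * (N + 2) := Nat.le_mul_of_pos_left _ hr
    omega
  have hbpos : 0 < b := by omega
  have hbR : (0:ℝ) < b := by exact_mod_cast hbpos
  have hbt : (b:ℝ) ≤ (b:ℝ) * t := le_mul_of_one_le_right hbR.le ht.le
  set a : ℕ := (⌊(b:ℝ) * t⌋).toNat + 1 with ha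
  have hfl : (b:ℤ) ≤ ⌊(b:ℝ) * t⌋ := by
    rw [Int.le_floor]; push_cast; exact hbt
  have h0 : (0:ℤ) ≤ ⌊(b:ℝ) * t⌋ := le_trans (by positivity) hfl
  have htn : ((⌊(b:ℝ) * t⌋.toNat : ℕ) : ℝ) = (⌊(b:ℝ) * t⌋ : ℝ) := by
    exact_mod_cast Int.toNat_of_nonneg h0
  have haR : (a:ℝ) = ⌊(b:ℝ) * t⌋ + 1 := by
    rw [ha]; push_cast; linarith [htn]
  have h1 : (b:ℝ) * t < a := by
    rw [haR]; exact Int.lt_floor_add_one _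
  have h2 : (a:ℝ) < ((b:ℝ) + 1) * t := by
    rw [haR]
    have := Int.floor_le ((b:ℝ) * t)
    nlinarith
  refine ⟨a, b, by omega, hbpos, ?_, hbN, ⟨N + 2, by exact_mod_cast hb1⟩, ?_, ?_⟩
  · have hba : b < a := by exact_mod_cast lt_of_le_of_lt hbt h1
    omega
  · rw [div_lt_iff₀ (by positivity)]
    linarith [h2, mul_comm ((b:ℝ)+1) t]
  · rw [lt_div_iff₀ hbR]
    linarith [h1]
end

section
/- Let r be a positive integer and t a real number with t > 1. Then there exists a positive integer a such that the fractional part of a/(t·r) satisfies 1 - 1/r < {a/(t·r)} < 1. Moreover, infinitely many such a exist. -/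
/-- For `r > 0` and real `t > 1`, there are infinitely many positive integers `a`
such that the fractional part of `a/(t·r)` lies in `(1 - 1/r, 1)`. -/
theorem stmt_1 (r : ℕ) (hr : 0 < r) (t : ℝ) (ht : 1 < t) (N : ℕ) :
    ∃ a : ℕ, 0 < a ∧ N < a ∧
      1 - 1 / (r : ℝ) < Int.fract ((a : ℝ) / (t * r)) ∧
      Int.fract ((a : ℝ) / (t * r)) < 1 := by
  have hr1 : (1:ℝ) ≤ r := by exact_mod_cast hr
  have hr0 : (0:ℝ) < r := by linarith
  set c : ℝ := t * r with hcdef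
  have hc1 : (1:ℝ) < c := by nlinarith
  have hc0 : (0:ℝ) < c := by linarith
  have hrc : (r:ℝ) < c := by nlinarith
  set m : ℤ := ⌈((N:ℝ) + 2) * c⌉ with hm
  have hN0 : (0:ℝ) ≤ (N:ℝ) := Nat.cast_nonneg N
  have hKc : ((N:ℝ) + 2) < ((N:ℝ) + 2) * c := by nlinarith
  have hmlb : ((N:ℝ) + 2) * c ≤ (m:ℝ) := Int.le_ceil _
  have hmub : (m:ℝ) < ((N:ℝ) + 2) * c + 1 := Int.ceil_lt_add_one _
  have hmN : ((N:ℝ) + 2) < (m:ℝ) := lt_of_lt_of_le hKc hmlb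
  have hmNint : (N:ℤ) + 2 < m := by exact_mod_cast hmN
  refine ⟨(m - 1).toNat, ?_, ?_, ?_, Int.fract_lt_one _⟩
  · omega
  · omega
  · have hcast : (((m - 1).toNat : ℝ)) = (m:ℝ) - 1 := by
      have : ((m - 1).toNat : ℤ) = m - 1 := Int.toNat_of_nonneg (by omega)
      exact_mod_cast this
    rw [hcast]
    have hinv : 1 / c < 1 := by
      rw [div_lt_one hc0]; exact hc1
    have hinvr : 1 / c < 1 / r := by
      exact one_div_lt_one_div_of_lt hr0 hrc
    -- bounds on ((m:ℝ)-1)/c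
    have hub : ((m:ℝ) - 1) / c < (N:ℝ) + 2 := by
      rw [div_lt_iff₀ hc0]; linarith
    have hlb : (N:ℝ) + 2 - 1 / c ≤ ((m:ℝ) - 1) / c := by
      rw [le_div_iff₀ hc0]
      have : (1 / c) * c = 1 := by field_simp
      nlinarith
    have hfloor : ⌊((m:ℝ) - 1) / c⌋ = (N:ℤ) + 1 := by
      rw [Int.floor_eq_iff]
      constructor
      · push_cast; linarith
      · push_cast; linarith
    rw [Int.fract, hfloor]
    push_cast
    linarith
end
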